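/- arXiv:1908.05699 — 10 statements merged into one kernel-verified Lean document; each statement's English description precedes it below -/
import Mathlib

section
/- Let a, b, c be real numbers. The cubic polynomial λ³ + aλ² + bλ + c is Schur stable if and only if |c| < 1, |a + c| < 1 + b, and b − a·c < 1 − c². -/
/-!
A real cubic has a real root `r`, so it factors as `(λ - r)(λ² + pλ + q)` with `p, q` real,
and it is Schur stable iff `|r| < 1` and the quadratic factor is. The roots of the quadratic
are either real, `s` and `t` with `q = st`, `p = -(s + t)`, or a conjugate pair `z, z̄` with
`q = |z|²`, `p = -2 Re z`; in both cases they lie in the unit disk iff `|q| < 1` and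
`|p| < 1 + q`. Finally, with `a = p - r`, `b = q - rp`, `c = -rq`, the identities
`1 ± a + b ± c = (1 ∓ r)(1 ± p + q)` and `1 - b + ac - c² = (1 - q)(1 + rp + r²q)`
turn these conditions on `r, p, q` into the stated ones on `a, b, c`.
-/

open Complex ComplexConjugate

def SchurStable (f : ℂ → ℂ) : Prop :=
  ∀ z, f z = 0 → ‖z‖ < 1

theorem schurStable_mul_iff {f g : ℂ → ℂ} :
    SchurStable (fun z => f z * g z) ↔ SchurStable f ∧ SchurStable g := by
  simp only [SchurStable, mul_eq_zero, or_imp, forall_and]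

theorem schurStable_sub_const_iff {w : ℂ} : SchurStable (fun z => z - w) ↔ ‖w‖ < 1 := by
  simp only [SchurStable, sub_eq_zero, forall_eq]

theorem schurStable_quadratic_iff_of_root {p q z₀ : ℂ} (h : z₀ ^ 2 + p * z₀ + q = 0) :
    SchurStable (fun z => z ^ 2 + p * z + q) ↔ ‖z₀‖ < 1 ∧ ‖-p - z₀‖ < 1 := by
  have hfactor : (fun z => z ^ 2 + p * z + q) = fun z => (z - z₀) * (z - (-p - z₀)) := by
    funext z; linear_combination h
  rw [hfactor, schurStable_mul_iff, schurStable_sub_const_iff, schurStable_sub_const_iff]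

theorem abs_lt_one_and_abs_lt_one_iff (s t : ℝ) :
    |s| < 1 ∧ |t| < 1 ↔ |s * t| < 1 ∧ |s + t| < 1 + s * t := by
  simp only [abs_lt]
  constructor
  · rintro ⟨⟨hs₁, hs₂⟩, ht₁, ht₂⟩
    refine ⟨⟨?_, ?_⟩, ?_, ?_⟩ <;> nlinarith [mul_pos (sub_pos.2 hs₂) (sub_pos.2 ht₂),
      mul_pos (neg_lt_iff_pos_add.1 hs₁) (neg_lt_iff_pos_add.1 ht₁),
      mul_pos (sub_pos.2 hs₂) (neg_lt_iff_pos_add.1 ht₁),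
      mul_pos (neg_lt_iff_pos_add.1 hs₁) (sub_pos.2 ht₂)]
  · rintro ⟨⟨hst₁, hst₂⟩, h₁, h₂⟩
    refine ⟨⟨?_, ?_⟩, ?_, ?_⟩ <;> nlinarith

theorem norm_lt_one_iff_of_im_ne_zero {z : ℂ} (him : z.im ≠ 0) :
    ‖z‖ < 1 ↔ |normSq z| < 1 ∧ |-2 * z.re| < 1 + normSq z := by
  have hy : 0 < z.im ^ 2 := by positivity
  rw [← sq_lt_one_iff₀ (norm_nonneg z), Complex.sq_norm, abs_of_nonneg (normSq_nonneg z),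
    normSq_apply]
  constructor
  · intro h
    refine ⟨h, abs_lt.2 ⟨?_, ?_⟩⟩ <;> nlinarith [sq_nonneg (z.re + 1), sq_nonneg (z.re - 1)]
  · exact And.left

theorem eq_of_quadratic_root_of_im_ne_zero {p q : ℝ} {z : ℂ} (hz : z ^ 2 + p * z + q = 0)
    (him : z.im ≠ 0) : p = -2 * z.re ∧ q = normSq z := by
  have hre := congrArg re hz
  have him' := congrArg im hz
  simp only [pow_two, add_re, mul_re, add_im, mul_im, ofReal_re, ofReal_im, zero_re,
    zero_im] at hre him'
  have hp : p = -2 * z.re := by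
    have : z.im * (2 * z.re + p) = 0 := by linear_combination him'
    linarith [(mul_eq_zero.1 this).resolve_left him]
  exact ⟨hp, by rw [normSq_apply]; subst hp; linear_combination hre⟩

theorem schurStable_real_quadratic_iff (p q : ℝ) :
    SchurStable (fun z => z ^ 2 + p * z + q) ↔ |q| < 1 ∧ |p| < 1 + q := by
  obtain ⟨w, hw⟩ := IsAlgClosed.exists_pow_nat_eq ((p : ℂ) ^ 2 - 4 * q) two_pos
  obtain ⟨z₀, hz₀⟩ : ∃ z₀ : ℂ, z₀ ^ 2 + p * z₀ + q = 0 :=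
    ⟨(-p + w) / 2, by linear_combination hw / 4⟩
  rw [schurStable_quadratic_iff_of_root hz₀]
  rcases eq_or_ne z₀.im 0 with him | him
  · obtain ⟨x, rfl⟩ : ∃ x : ℝ, z₀ = x := ⟨z₀.re, Complex.ext rfl him⟩
    have hx : x ^ 2 + p * x + q = 0 := by exact_mod_cast hz₀
    have hq : x * (-p - x) = q := by linear_combination -hx
    rw [← ofReal_neg, ← ofReal_sub, norm_real, norm_real, Real.norm_eq_abs, Real.norm_eq_abs,
      abs_lt_one_and_abs_lt_one_iff, hq, add_sub_cancel, abs_neg]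
  · obtain ⟨hp, hq⟩ := eq_of_quadratic_root_of_im_ne_zero hz₀ him
    have hconj : -(p : ℂ) - z₀ = conj z₀ := by
      refine Complex.ext ?_ (by simp)
      simp only [sub_re, neg_re, ofReal_re, conj_re, hp]
      ring
    rw [hconj, norm_conj, and_self, hp, hq]
    exact norm_lt_one_iff_of_im_ne_zero him

theorem exists_cubic_root (a b c : ℝ) : ∃ r : ℝ, r ^ 3 + a * r ^ 2 + b * r + c = 0 := by
  set M := 1 + |a| + |b| + |c|
  have hM : 1 ≤ M := by linarith [abs_nonneg a, abs_nonneg b, abs_nonneg c]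
  have hneg : (-M) ^ 3 + a * (-M) ^ 2 + b * (-M) + c ≤ 0 := by
    nlinarith [le_abs_self a, neg_abs_le b, le_abs_self c, abs_nonneg a, abs_nonneg b,
      abs_nonneg c, sq_nonneg M]
  have hpos : 0 ≤ M ^ 3 + a * M ^ 2 + b * M + c := by
    nlinarith [neg_abs_le a, neg_abs_le b, neg_abs_le c, abs_nonneg a, abs_nonneg b,
      abs_nonneg c, sq_nonneg M]
  obtain ⟨r, -, hr⟩ := intermediate_value_Icc (by linarith : -M ≤ M)
    (f := fun x => x ^ 3 + a * x ^ 2 + b * x + c) (by fun_prop) ⟨hneg, hpos⟩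
  exact ⟨r, hr⟩

theorem one_add_mul_add_sq_mul_pos {r p q : ℝ} (hr : |r| < 1) (hrq : |r * q| < 1)
    (hp : |p| < 1 + q) : 0 < 1 + r * p + r ^ 2 * q := by
  have hrq' : |r| * q < 1 := by
    rcases le_or_gt 0 q with hq | hq
    · rwa [abs_mul, abs_of_nonneg hq] at hrq
    · nlinarith [abs_nonneg r]
  calc 0 < (1 - |r|) * (1 - |r| * q) := mul_pos (by linarith) (by linarith)
    _ = 1 - |r| * (1 + q) + r ^ 2 * q := by rw [← sq_abs r]; ring
    _ ≤ 1 - |r| * |p| + r ^ 2 * q := by gcongr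
    _ ≤ 1 + r * p + r ^ 2 * q := by
      have := neg_abs_le (r * p); rw [abs_mul] at this; linarith

theorem lt_one_of_mul_pos_of_mul_pos {r p q : ℝ} (hrq : |r * q| < 1)
    (h₁ : 0 < (1 - r) * (1 + p + q)) (h₃ : 0 < (1 - q) * (1 + r * p + r ^ 2 * q)) : r < 1 := by
  have hrq' : r * q < 1 := (abs_lt.1 hrq).2
  by_contra! hr
  have hr' : 1 < r := hr.lt_of_ne (by rintro rfl; simp at h₁)
  have hpq : 1 + p + q < 0 := neg_of_mul_pos_right h₁ (by linarith)
  have hq : q < 1 := by nlinarith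
  have hneg : 1 + r * p + r ^ 2 * q < 0 := by
    -- `1 + r p + r² q = (1 - r)(1 - r q) + r (1 + p + q)`
    nlinarith [mul_neg_of_neg_of_pos (by linarith : 1 - r < 0) (by linarith : 0 < 1 - r * q),
      mul_neg_of_pos_of_neg (by linarith : 0 < r) hpq]
  nlinarith [mul_neg_of_pos_of_neg (sub_pos.2 hq) hneg]

theorem cubic_conditions_iff {a b c r p q : ℝ} (ha : a = p - r) (hb : b = q - r * p)
    (hc : c = -(r * q)) :
    (|r| < 1 ∧ |q| < 1 ∧ |p| < 1 + q) ↔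
      (|c| < 1 ∧ |a + c| < 1 + b ∧ b - a * c < 1 - c ^ 2) := by
  subst ha hb hc
  have hsum_iff : |(p - r) + -(r * q)| < 1 + (q - r * p) ↔
      0 < (1 - r) * (1 + p + q) ∧ 0 < (1 + r) * (1 - p + q) := by
    rw [abs_lt]; constructor <;> rintro ⟨h, h'⟩ <;> constructor <;> linarith
  have hlast_iff : (q - r * p) - (p - r) * -(r * q) < 1 - (-(r * q)) ^ 2 ↔
      0 < (1 - q) * (1 + r * p + r ^ 2 * q) := by
    rw [← sub_pos]; ring_nf
  rw [abs_neg, hsum_iff, hlast_iff]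
  constructor
  · rintro ⟨hr, hq, hp⟩
    have hrq : |r * q| < 1 := by
      rw [abs_mul]; nlinarith [abs_nonneg r, abs_nonneg q]
    obtain ⟨hr₁, hr₂⟩ := abs_lt.1 hr
    obtain ⟨hq₁, hq₂⟩ := abs_lt.1 hq
    obtain ⟨hp₁, hp₂⟩ := abs_lt.1 hp
    exact ⟨hrq, ⟨mul_pos (by linarith) (by linarith), mul_pos (by linarith) (by linarith)⟩,
      mul_pos (by linarith) (one_add_mul_add_sq_mul_pos hr hrq hp)⟩
  · rintro ⟨hrq, ⟨h₁, h₂⟩, h₃⟩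
    have hr₂ : r < 1 := lt_one_of_mul_pos_of_mul_pos hrq h₁ h₃
    have hr₁ : -r < 1 := lt_one_of_mul_pos_of_mul_pos (p := -p) (by rwa [neg_mul, abs_neg])
      (by linarith) (by linarith)
    have hr : |r| < 1 := abs_lt.2 ⟨by linarith, hr₂⟩
    have hp : |p| < 1 + q := abs_lt.2
      ⟨by linarith [pos_of_mul_pos_right h₁ (by linarith)],
        by linarith [pos_of_mul_pos_right h₂ (by linarith)]⟩
    refine ⟨hr, abs_lt.2 ⟨by linarith [abs_nonneg p], ?_⟩, hp⟩
    by_contra! hq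
    nlinarith [mul_nonpos_of_nonpos_of_nonneg (sub_nonpos.2 hq)
      (one_add_mul_add_sq_mul_pos hr hrq hp).le]

/-- Corollary (cubic case of Schur's theorem): the real cubic polynomial
`λ³ + aλ² + bλ + c` is Schur stable (all complex roots in the open unit disk)
iff `|c| < 1`, `|a + c| < 1 + b`, and `b − a·c < 1 − c²`. -/
theorem cubic_schur_stable (a b c : ℝ) :
    (∀ z : ℂ, z ^ 3 + (a : ℂ) * z ^ 2 + (b : ℂ) * z + (c : ℂ) = 0 → ‖z‖ < 1) ↔
      (|c| < 1 ∧ |a + c| < 1 + b ∧ b - a * c < 1 - c ^ 2) := by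
  obtain ⟨r, p, q, ha, hb, hc⟩ : ∃ r p q : ℝ, a = p - r ∧ b = q - r * p ∧ c = -(r * q) := by
    obtain ⟨r, hr⟩ := exists_cubic_root a b c
    exact ⟨r, a + r, b + a * r + r ^ 2, by ring, by ring, by linear_combination hr⟩
  have hfactor (z : ℂ) : z ^ 3 + (a : ℂ) * z ^ 2 + (b : ℂ) * z + (c : ℂ) =
      (z - r) * (z ^ 2 + p * z + q) := by
    rw [ha, hb, hc]; push_cast; ring
  calc _ ↔ SchurStable (fun z => (z - r) * (z ^ 2 + p * z + q)) := by simp only [hfactor]; rfl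
    _ ↔ ‖(r : ℂ)‖ < 1 ∧ SchurStable (fun z => z ^ 2 + p * z + q) :=
      schurStable_mul_iff.trans (and_congr_left' schurStable_sub_const_iff)
    _ ↔ |r| < 1 ∧ |q| < 1 ∧ |p| < 1 + q := by
      rw [norm_real, Real.norm_eq_abs, schurStable_real_quadratic_iff]
    _ ↔ _ := cubic_conditions_iff ha hb hc
end

section
/- Let a, b, c, d be real numbers. The quartic polynomial λ⁴ + aλ³ + bλ² + cλ + d is Schur stable if and only if |c − a·d| < 1 − d², |a + c| < b + d + 1, and b < (1 + d) + (c − a·d)(a − c)/(d − 1)². -/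
/-!
For a real polynomial `p` of degree `n` with leading coefficient `aₙ` and constant term `a₀`,
let `p* = Xⁿ p(1/X)` be its reverse and `T p = (aₙ p - a₀ p*) / X` its Schur transform. If every
root `s` of `p` lies in the open unit disk, then `|1 - s w| ≤ |w̄ - s|` for `|w| ≥ 1`, so factor
by factor `|p*(w)| ≤ |p(w̄)| = |p(w)|`; moreover `|a₀| = |aₙ| ∏ |s| < |aₙ|`. From these two
facts, `p` is Schur stable iff `|a₀| < |aₙ|` and `T p` is Schur stable: a root `w` of `T p`
with `|w| ≥ 1` would give `|aₙ| |p(w)| = |a₀| |p*(w)| ≤ |a₀| |p(w)| < |aₙ| |p(w)|`, and a root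
`w` of `p` with `|w| ≥ 1` would give `|aₙ| |p*(w)| = |(T p)*(w)| ≤ |T p(w)| ≤ |a₀| |p*(w)|`,
forcing `T p (w) = 0`. Three Schur transforms take the quartic down to a linear polynomial, and
the resulting inequalities factor into the three stated ones.
-/

open Polynomial ComplexConjugate

theorem norm_one_sub_mul_le_norm_conj_sub {s w : ℂ} (hs : ‖s‖ < 1) (hw : 1 ≤ ‖w‖) :
    ‖1 - s * w‖ ≤ ‖conj w - s‖ := by
  have h : ‖conj w - s‖ ^ 2 - ‖1 - s * w‖ ^ 2 = (‖w‖ ^ 2 - 1) * (1 - ‖s‖ ^ 2) := by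
    simp only [← Complex.normSq_eq_norm_sq, Complex.normSq_apply, Complex.sub_re,
      Complex.sub_im, Complex.mul_re, Complex.mul_im, Complex.one_re, Complex.one_im,
      Complex.conj_re, Complex.conj_im]
    ring
  have : 0 ≤ (‖w‖ ^ 2 - 1) * (1 - ‖s‖ ^ 2) :=
    mul_nonneg (by nlinarith) (by nlinarith [norm_nonneg s])
  exact (sq_le_sq₀ (norm_nonneg _) (norm_nonneg _)).1 (by linarith)

namespace Polynomial

theorem reflect_X {R : Type*} [Semiring R] (N : ℕ) : reflect N (X : R[X]) = X ^ revAt N 1 := by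
  simpa using reflect_monomial (R := R) N 1

theorem reverse_X_sub_C {R : Type*} [Ring R] [Nontrivial R] (s : R) :
    (X - C s).reverse = 1 - C s * X := by
  rw [sub_eq_add_neg, ← C_neg, reverse_add_C, ← one_mul X, reverse_mul_X, ← C_1, reverse_C]
  simp [sub_eq_add_neg]

theorem reverse_map {K L : Type*} [DivisionRing K] [Semiring L] [Nontrivial L] (f : K →+* L)
    (p : K[X]) : (p.map f).reverse = p.reverse.map f := by
  rw [reverse, reverse, natDegree_map, reflect_map]

theorem C_leadingCoeff_mul_prod_roots (P : ℂ[X]) :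
    C P.leadingCoeff * (P.roots.map fun s => X - C s).prod = P :=
  C_leadingCoeff_mul_prod_multiset_X_sub_C IsAlgClosed.card_roots_eq_natDegree

theorem norm_eval_reverse_prod_X_sub_C_le {S : Multiset ℂ} (hS : ∀ s ∈ S, ‖s‖ < 1) {w : ℂ}
    (hw : 1 ≤ ‖w‖) :
    ‖(S.map fun s => X - C s).prod.reverse.eval w‖ ≤
      ‖(S.map fun s => X - C s).prod.eval (conj w)‖ := by
  induction S using Multiset.induction_on with
  | empty => rw [Multiset.map_zero, Multiset.prod_zero, ← C_1, reverse_C, eval_C, eval_C]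
  | cons s S ih =>
    rw [Multiset.forall_mem_cons] at hS
    simp only [Multiset.map_cons, Multiset.prod_cons, reverse_mul_of_domain, reverse_X_sub_C,
      eval_mul, norm_mul, eval_sub, eval_one, eval_X, eval_C]
    exact mul_le_mul (norm_one_sub_mul_le_norm_conj_sub hS.1 hw) (ih hS.2) (norm_nonneg _)
      (norm_nonneg _)

theorem norm_eval_zero_prod_X_sub_C_lt_one {S : Multiset ℂ} (hS : ∀ s ∈ S, ‖s‖ < 1)
    (h0 : S ≠ 0) : ‖(S.map fun s => X - C s).prod.eval 0‖ < 1 := by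
  induction S using Multiset.induction_on with
  | empty => exact absurd rfl h0
  | cons s T ih =>
    rw [Multiset.forall_mem_cons] at hS
    rcases eq_or_ne T 0 with rfl | hT
    · simpa using hS.1
    simp only [Multiset.map_cons, Multiset.prod_cons, eval_mul, norm_mul, eval_sub, eval_X,
      eval_C, zero_sub, norm_neg]
    nlinarith [norm_nonneg s, ih hS.2 hT]

theorem norm_eval_reverse_le_of_roots {P : ℂ[X]} (hP : ∀ s ∈ P.roots, ‖s‖ < 1) {w : ℂ}
    (hw : 1 ≤ ‖w‖) : ‖P.reverse.eval w‖ ≤ ‖P.eval (conj w)‖ := by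
  rw [← C_leadingCoeff_mul_prod_roots P, reverse_mul_of_domain, reverse_C]
  simp only [eval_mul, eval_C, norm_mul]
  exact mul_le_mul_of_nonneg_left (norm_eval_reverse_prod_X_sub_C_le hP hw) (norm_nonneg _)

theorem norm_coeff_zero_lt_of_roots {P : ℂ[X]} (hP : ∀ s ∈ P.roots, ‖s‖ < 1)
    (hn : 0 < P.natDegree) : ‖P.coeff 0‖ < ‖P.leadingCoeff‖ := by
  have h0 : P.roots ≠ 0 := by
    rw [← Multiset.card_pos, IsAlgClosed.card_roots_eq_natDegree]; exact hn
  have hlc : 0 < ‖P.leadingCoeff‖ := by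
    rw [norm_pos_iff, leadingCoeff_ne_zero]; rintro rfl; simp at hn
  calc ‖P.coeff 0‖ = ‖P.leadingCoeff‖ * ‖(P.roots.map fun s => X - C s).prod.eval 0‖ := by
        conv_lhs => rw [coeff_zero_eq_eval_zero, ← C_leadingCoeff_mul_prod_roots P]
        rw [eval_mul, eval_C, norm_mul]
    _ < ‖P.leadingCoeff‖ * 1 := by
        gcongr; exact norm_eval_zero_prod_X_sub_C_lt_one hP h0
    _ = ‖P.leadingCoeff‖ := mul_one _

def IsSchurStable (p : ℝ[X]) : Prop := ∀ z : ℂ, aeval z p = 0 → ‖z‖ < 1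

/-- The numerator has zero constant term, so `divX` is exact division by `X`. -/
noncomputable def schurTransform (p : ℝ[X]) : ℝ[X] :=
  divX (C p.leadingCoeff * p - C (p.coeff 0) * p.reverse)

theorem isSchurStable_C {k : ℝ} : IsSchurStable (C k) ↔ k ≠ 0 := by
  refine ⟨fun h hk => ?_, fun hk z hz => absurd (by simpa using hz) hk⟩
  subst hk
  simpa using h 1

namespace IsSchurStable

variable {p : ℝ[X]}

theorem forall_mem_roots_map (hp : IsSchurStable p) :
    ∀ s ∈ (p.map (algebraMap ℝ ℂ)).roots, ‖s‖ < 1 := fun s hs =>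
  hp s (by rw [← eval_map_algebraMap]; exact (mem_roots'.1 hs).2)

theorem norm_aeval_reverse_le (hp : IsSchurStable p) {w : ℂ} (hw : 1 ≤ ‖w‖) :
    ‖aeval w p.reverse‖ ≤ ‖aeval w p‖ := by
  have h := norm_eval_reverse_le_of_roots hp.forall_mem_roots_map hw
  rwa [reverse_map, eval_map_algebraMap, eval_map_algebraMap, aeval_conj,
    Complex.norm_conj] at h

theorem abs_coeff_zero_lt (hp : IsSchurStable p) (hn : 0 < p.natDegree) :
    |p.coeff 0| < |p.leadingCoeff| := by
  have h := norm_coeff_zero_lt_of_roots hp.forall_mem_roots_map (by rwa [natDegree_map])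
  simpa [coeff_map, leadingCoeff_map] using h

end IsSchurStable

theorem X_mul_schurTransform (p : ℝ[X]) :
    X * schurTransform p = C p.leadingCoeff * p - C (p.coeff 0) * p.reverse := by
  rw [schurTransform, ← add_zero (X * _), ← C_0]
  convert X_mul_divX_add _ using 3
  simp [mul_comm]

theorem reverse_schurTransform {p : ℝ[X]} (h : |p.coeff 0| < |p.leadingCoeff|) :
    (schurTransform p).reverse = C p.leadingCoeff * p.reverse - C (p.coeff 0) * p := by
  have hdeg : (C p.leadingCoeff * p - C (p.coeff 0) * p.reverse).natDegree = p.natDegree := by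
    apply natDegree_eq_of_le_of_coeff_ne_zero
    · exact (natDegree_sub_le _ _).trans (max_le (natDegree_C_mul_le _ _)
        ((natDegree_C_mul_le _ _).trans (reverse_natDegree_le p)))
    · rw [coeff_sub, coeff_C_mul, coeff_C_mul, coeff_reverse, revAt_le le_rfl, Nat.sub_self,
        coeff_natDegree, ← sq, ← sq, sub_ne_zero]
      exact (sq_lt_sq.2 h).ne'
  rw [← reverse_X_mul, X_mul_schurTransform, reverse, hdeg, reflect_sub, reflect_C_mul,
    reflect_C_mul, reverse, reflect_reflect]

theorem IsSchurStable.schurTransform {p : ℝ[X]} (hp : IsSchurStable p) (hn : 0 < p.natDegree) :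
    IsSchurStable (Polynomial.schurTransform p) := by
  intro w hw
  by_contra! hw1
  have hpw : 0 < ‖aeval w p‖ := norm_pos_iff.2 fun h => (hp w h).not_ge hw1
  have h := congrArg (aeval w) (X_mul_schurTransform p)
  simp only [map_mul, map_sub, aeval_X, aeval_C, hw, mul_zero] at h
  have h' := congrArg norm (eq_of_sub_eq_zero h.symm)
  simp only [norm_mul, Complex.coe_algebraMap, Complex.norm_real, Real.norm_eq_abs] at h'
  have hlt := hp.abs_coeff_zero_lt hn
  have hle := hp.norm_aeval_reverse_le hw1
  nlinarith [abs_nonneg (p.coeff 0)]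

theorem IsSchurStable.of_schurTransform {p : ℝ[X]} (h : |p.coeff 0| < |p.leadingCoeff|)
    (hq : IsSchurStable (Polynomial.schurTransform p)) : IsSchurStable p := by
  intro w hw
  by_contra! hw1
  have hqw : 0 < ‖aeval w (Polynomial.schurTransform p)‖ :=
    norm_pos_iff.2 fun h => (hq w h).not_ge hw1
  have h1 := congrArg (aeval w) (X_mul_schurTransform p)
  have h2 := congrArg (aeval w) (reverse_schurTransform h)
  simp only [map_mul, map_sub, aeval_X, aeval_C, hw, mul_zero, zero_sub, sub_zero] at h1 h2
  have n1 := congrArg norm h1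
  have n2 := congrArg norm h2
  simp only [norm_mul, norm_neg, Complex.coe_algebraMap, Complex.norm_real,
    Real.norm_eq_abs] at n1 n2
  have hle := hq.norm_aeval_reverse_le hw1
  have hq1 : ‖aeval w (Polynomial.schurTransform p)‖ ≤ |p.coeff 0| * ‖aeval w p.reverse‖ := by
    nlinarith
  have hx : 0 < ‖aeval w p.reverse‖ :=
    pos_of_mul_pos_right (hqw.trans_le hq1) (abs_nonneg _)
  nlinarith [mul_lt_mul_of_pos_right h hx]

theorem isSchurStable_iff_schurTransform {p : ℝ[X]} (hn : 0 < p.natDegree) :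
    IsSchurStable p ↔ |p.coeff 0| < |p.leadingCoeff| ∧ IsSchurStable (schurTransform p) :=
  ⟨fun hp => ⟨hp.abs_coeff_zero_lt hn, hp.schurTransform hn⟩,
    fun h => IsSchurStable.of_schurTransform h.1 h.2⟩

theorem natDegree_quartic {a b c d e : ℝ} (ha : a ≠ 0) :
    (C a * X ^ 4 + C b * X ^ 3 + C c * X ^ 2 + C d * X + C e).natDegree = 4 := by
  compute_degree!

theorem leadingCoeff_quartic {a b c d e : ℝ} (ha : a ≠ 0) :
    (C a * X ^ 4 + C b * X ^ 3 + C c * X ^ 2 + C d * X + C e).leadingCoeff = a := by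
  rw [leadingCoeff, natDegree_quartic ha]
  simp

theorem schurTransform_linear {a b : ℝ} (ha : a ≠ 0) :
    schurTransform (C a * X + C b) = C (a ^ 2 - b ^ 2) := by
  refine mul_left_cancel₀ X_ne_zero ?_
  rw [X_mul_schurTransform, leadingCoeff_linear ha, reverse, natDegree_linear ha]
  simp [reflect_X, revAt_le]
  ring

theorem schurTransform_quadratic {a b c : ℝ} (ha : a ≠ 0) :
    schurTransform (C a * X ^ 2 + C b * X + C c) = C (a ^ 2 - c ^ 2) * X + C (a * b - c * b) := by
  refine mul_left_cancel₀ X_ne_zero ?_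
  rw [X_mul_schurTransform, leadingCoeff_quadratic ha, reverse, natDegree_quadratic ha]
  simp [reflect_X, revAt_le]
  ring

theorem schurTransform_cubic {a b c d : ℝ} (ha : a ≠ 0) :
    schurTransform (C a * X ^ 3 + C b * X ^ 2 + C c * X + C d) =
      C (a ^ 2 - d ^ 2) * X ^ 2 + C (a * b - d * c) * X + C (a * c - d * b) := by
  refine mul_left_cancel₀ X_ne_zero ?_
  rw [X_mul_schurTransform, leadingCoeff_cubic ha, reverse, natDegree_cubic ha]
  simp [reflect_X, revAt_le]
  ring

theorem schurTransform_quartic {a b c d e : ℝ} (ha : a ≠ 0) :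
    schurTransform (C a * X ^ 4 + C b * X ^ 3 + C c * X ^ 2 + C d * X + C e) =
      C (a ^ 2 - e ^ 2) * X ^ 3 + C (a * b - e * d) * X ^ 2 + C (a * c - e * c) * X +
        C (a * d - e * b) := by
  refine mul_left_cancel₀ X_ne_zero ?_
  rw [X_mul_schurTransform, leadingCoeff_quartic ha, reverse, natDegree_quartic ha]
  simp [reflect_X, revAt_le]
  ring

theorem isSchurStable_linear {a b : ℝ} (ha : a ≠ 0) :
    IsSchurStable (C a * X + C b) ↔ |b| < |a| := by
  rw [isSchurStable_iff_schurTransform (by rw [natDegree_linear ha]; exact one_pos),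
    schurTransform_linear ha, isSchurStable_C, leadingCoeff_linear ha,
    show (C a * X + C b : ℝ[X]).coeff 0 = b by simp]
  exact and_iff_left_of_imp fun h => sub_ne_zero.2 (sq_lt_sq.2 h).ne'

theorem isSchurStable_quadratic {a b c : ℝ} (ha : 0 < a) :
    IsSchurStable (C a * X ^ 2 + C b * X + C c) ↔ |c| < a ∧ |b| < a + c := by
  rw [isSchurStable_iff_schurTransform (by rw [natDegree_quadratic ha.ne']; exact two_pos),
    schurTransform_quadratic ha.ne', leadingCoeff_quadratic ha.ne', abs_of_pos ha,
    show (C a * X ^ 2 + C b * X + C c : ℝ[X]).coeff 0 = c by simp]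
  refine and_congr_right fun hc => ?_
  obtain ⟨hc1, hc2⟩ := abs_lt.1 hc
  rw [isSchurStable_linear (by nlinarith), show a * b - c * b = (a - c) * b by ring,
    show a ^ 2 - c ^ 2 = (a - c) * (a + c) by ring, abs_mul, abs_mul,
    abs_of_pos (by linarith : 0 < a - c), abs_of_pos (by linarith : 0 < a + c),
    mul_lt_mul_iff_right₀ (by linarith)]

theorem isSchurStable_cubic {a b c d : ℝ} (ha : 0 < a) :
    IsSchurStable (C a * X ^ 3 + C b * X ^ 2 + C c * X + C d) ↔
      |d| < a ∧ |a * c - d * b| < a ^ 2 - d ^ 2 ∧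
        |a * b - d * c| < a ^ 2 - d ^ 2 + (a * c - d * b) := by
  rw [isSchurStable_iff_schurTransform (by rw [natDegree_cubic ha.ne']; exact three_pos),
    schurTransform_cubic ha.ne', leadingCoeff_cubic ha.ne', abs_of_pos ha,
    show (C a * X ^ 3 + C b * X ^ 2 + C c * X + C d : ℝ[X]).coeff 0 = d by simp]
  refine and_congr_right fun hd => isSchurStable_quadratic ?_
  obtain ⟨hd1, hd2⟩ := abs_lt.1 hd
  nlinarith

theorem isSchurStable_quartic {a b c d e : ℝ} (ha : 0 < a) :
    IsSchurStable (C a * X ^ 4 + C b * X ^ 3 + C c * X ^ 2 + C d * X + C e) ↔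
      |e| < a ∧ IsSchurStable (C (a ^ 2 - e ^ 2) * X ^ 3 + C (a * b - e * d) * X ^ 2 +
        C (a * c - e * c) * X + C (a * d - e * b)) := by
  rw [isSchurStable_iff_schurTransform (by rw [natDegree_quartic ha.ne']; exact four_pos),
    schurTransform_quartic ha.ne', leadingCoeff_quartic ha.ne', abs_of_pos ha,
    show (C a * X ^ 4 + C b * X ^ 3 + C c * X ^ 2 + C d * X + C e : ℝ[X]).coeff 0 = e by simp]

end Polynomial

theorem quartic_schurCohn_conditions_iff {a b c d : ℝ} (hd : |d| < 1) :
    (|c - d * a| < 1 - d ^ 2 ∧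
      |(1 - d ^ 2) * (b - d * b) - (c - d * a) * (a - d * c)| < (1 - d ^ 2) ^ 2 - (c - d * a) ^ 2 ∧
      |(1 - d ^ 2) * (a - d * c) - (c - d * a) * (b - d * b)| <
        (1 - d ^ 2) ^ 2 - (c - d * a) ^ 2 +
          ((1 - d ^ 2) * (b - d * b) - (c - d * a) * (a - d * c))) ↔
      (|c - a * d| < 1 - d ^ 2 ∧ |a + c| < b + d + 1 ∧
        b < (1 + d) + (c - a * d) * (a - c) / (d - 1) ^ 2) := by
  obtain ⟨hd1, hd2⟩ := abs_lt.1 hd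
  rw [show c - d * a = c - a * d by ring]
  refine and_congr_right fun hK => ?_
  obtain ⟨hK1, hK2⟩ := abs_lt.1 hK
  set K := c - a * d
  have hplus : 0 < (1 - d ^ 2) ^ 2 - K ^ 2 + ((1 - d ^ 2) * (b - d * b) - K * (a - d * c)) +
        ((1 - d ^ 2) * (a - d * c) - K * (b - d * b)) ↔ 0 < 1 + a + b + c + d := by
    rw [show (1 - d ^ 2) ^ 2 - K ^ 2 + ((1 - d ^ 2) * (b - d * b) - K * (a - d * c)) +
        ((1 - d ^ 2) * (a - d * c) - K * (b - d * b)) =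
        ((1 - d ^ 2) - K) * (1 - d) * (1 + a + b + c + d) by simp only [K]; ring]
    exact mul_pos_iff_of_pos_left (mul_pos (by linarith) (by linarith))
  have hminus : 0 < (1 - d ^ 2) ^ 2 - K ^ 2 + ((1 - d ^ 2) * (b - d * b) - K * (a - d * c)) -
        ((1 - d ^ 2) * (a - d * c) - K * (b - d * b)) ↔ 0 < 1 - a + b - c + d := by
    rw [show (1 - d ^ 2) ^ 2 - K ^ 2 + ((1 - d ^ 2) * (b - d * b) - K * (a - d * c)) -
        ((1 - d ^ 2) * (a - d * c) - K * (b - d * b)) =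
        ((1 - d ^ 2) + K) * (1 - d) * (1 - a + b - c + d) by simp only [K]; ring]
    exact mul_pos_iff_of_pos_left (mul_pos (by linarith) (by linarith))
  have hdiff : 0 < (1 - d ^ 2) ^ 2 - K ^ 2 - ((1 - d ^ 2) * (b - d * b) - K * (a - d * c)) ↔
      b < (1 + d) + K * (a - c) / (d - 1) ^ 2 := by
    rw [show (1 - d ^ 2) ^ 2 - K ^ 2 - ((1 - d ^ 2) * (b - d * b) - K * (a - d * c)) =
        (1 + d) * (K * (a - c) - (b - (1 + d)) * (d - 1) ^ 2) by simp only [K]; ring,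
      mul_pos_iff_of_pos_left (by linarith), sub_pos, ← sub_lt_iff_lt_add',
      lt_div_iff₀ (by nlinarith)]
  rw [abs_lt, abs_lt, abs_lt, ← hdiff]
  constructor
  · rintro ⟨⟨hu1, hu2⟩, hv1, hv2⟩
    have := hplus.1 (by linarith)
    have := hminus.1 (by linarith)
    exact ⟨⟨by linarith, by linarith⟩, by linarith⟩
  · rintro ⟨⟨h1, h2⟩, h3⟩
    have := hplus.2 (by linarith)
    have := hminus.2 (by linarith)
    exact ⟨⟨by linarith, by linarith⟩, by linarith, by linarith⟩

/-- Corollary (quartic case of Schur's theorem): the real quartic polynomial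
`λ⁴ + aλ³ + bλ² + cλ + d` is Schur stable (all complex roots in the open unit disk)
iff `|c − ad| < 1 − d²`, `|a + c| < b + d + 1`, and
`b < (1 + d) + (c − ad)(a − c)/(d − 1)²`. -/
theorem quartic_schur_stable (a b c d : ℝ) :
    (∀ z : ℂ, z ^ 4 + (a : ℂ) * z ^ 3 + (b : ℂ) * z ^ 2 + (c : ℂ) * z + (d : ℂ) = 0 →
        ‖z‖ < 1) ↔
      (|c - a * d| < 1 - d ^ 2 ∧ |a + c| < b + d + 1 ∧
        b < (1 + d) + (c - a * d) * (a - c) / (d - 1) ^ 2) := by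
  have hquartic : (∀ z : ℂ, z ^ 4 + (a : ℂ) * z ^ 3 + (b : ℂ) * z ^ 2 + (c : ℂ) * z + (d : ℂ) = 0 →
      ‖z‖ < 1) ↔ IsSchurStable (C 1 * X ^ 4 + C a * X ^ 3 + C b * X ^ 2 + C c * X + C d) := by
    simp [IsSchurStable]
  have hlead : |d| < 1 → 0 < 1 - d ^ 2 := fun hd => by nlinarith [abs_lt.1 hd]
  rw [hquartic, isSchurStable_quartic one_pos]
  simp only [one_pow, one_mul]
  constructor
  · rintro ⟨hd, hcubic⟩
    exact (quartic_schurCohn_conditions_iff hd).1 ((isSchurStable_cubic (hlead hd)).1 hcubic)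
  · intro h
    have hd : |d| < 1 := by
      rw [← sq_lt_one_iff_abs_lt_one]; linarith [abs_nonneg (c - a * d), h.1]
    exact ⟨hd, (isSchurStable_cubic (hlead hd)).2 ((quartic_schurCohn_conditions_iff hd).2 h)⟩
end

section
/- Let α > 0 and σ > 0 be real numbers with α²σ² < 4. Then every complex root λ of the polynomial (λ − 1)² + α²σ²λ = λ² + (α²σ² − 2)λ + 1 satisfies |λ| = 1. In particular, Gauss–Seidel (alternating) gradient descent on a bilinear game never converges but produces a limit cycle when ασ < 2 for every singular value σ. -/
/-!
A root `z` of `z² + b z + 1` with `b² ≤ 4` satisfies `z * conj z = 1`. If `z` is real, the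
discriminant `b² - 4 ≤ 0` forces the double root `z = -b/2`, whence `z² = 1`. Otherwise `conj z`
is the other root, and Vieta's formula for the product of the roots gives `z * conj z = 1`.
The characteristic polynomial of Gauss–Seidel descent is of this form with `b = α²σ² - 2`.
-/

open ComplexConjugate

theorem Real.sq_eq_one_of_sq_add_mul_add_one_eq_zero {b x : ℝ} (hb : b ^ 2 ≤ 4)
    (hx : x ^ 2 + b * x + 1 = 0) : x ^ 2 = 1 := by
  have hdisc : (2 * x + b) ^ 2 = b ^ 2 - 4 := by linear_combination 4 * hx
  have hdouble : 2 * x + b = 0 := pow_eq_zero_iff two_ne_zero |>.mp <|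
    le_antisymm (by linarith) (sq_nonneg _)
  linear_combination x * hdouble - hx

theorem Complex.mul_conj_eq_one_of_sq_add_mul_add_one_eq_zero {b : ℝ} (hb : b ^ 2 ≤ 4) {z : ℂ}
    (hz : z ^ 2 + b * z + 1 = 0) : z * conj z = 1 := by
  by_cases hreal : conj z = z
  · obtain ⟨x, rfl⟩ := Complex.conj_eq_iff_real.mp hreal
    have hx : x ^ 2 + b * x + 1 = 0 := by exact_mod_cast hz
    rw [hreal, ← sq]
    exact_mod_cast Real.sq_eq_one_of_sq_add_mul_add_one_eq_zero hb hx
  · have hconj : conj z ^ 2 + b * conj z + 1 = 0 := by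
      simpa using congrArg conj hz
    have hsum : z + conj z + b = 0 :=
      mul_left_cancel₀ (sub_ne_zero.mpr (Ne.symm hreal)) (by linear_combination hz - hconj)
    linear_combination z * hsum - hz

theorem Complex.norm_eq_one_of_sq_add_mul_add_one_eq_zero {b : ℝ} (hb : b ^ 2 ≤ 4) {z : ℂ}
    (hz : z ^ 2 + b * z + 1 = 0) : ‖z‖ = 1 := by
  have hnorm_sq : ‖z‖ ^ 2 = 1 := by
    have := Complex.mul_conj_eq_one_of_sq_add_mul_add_one_eq_zero hb hz
    rw [Complex.mul_conj'] at this
    exact_mod_cast this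
  exact (pow_eq_one_iff_of_nonneg (norm_nonneg z) two_ne_zero).mp hnorm_sq

theorem gauss_seidel_gd_limit_cycle_general (α σ : ℝ)
    (h : α ^ 2 * σ ^ 2 < 4) :
    ∀ z : ℂ, (z - 1) ^ 2 + (α : ℂ) ^ 2 * (σ : ℂ) ^ 2 * z = 0 → ‖z‖ = 1 := by
  intro z hz
  have hc : 0 ≤ α ^ 2 * σ ^ 2 := by positivity
  refine Complex.norm_eq_one_of_sq_add_mul_add_one_eq_zero (b := α ^ 2 * σ ^ 2 - 2) ?_ ?_
  · nlinarith
  · push_cast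
    linear_combination hz

/-- Gauss–Seidel gradient descent on a bilinear game: if `α²σ² < 4`, every
complex root `λ` of the characteristic polynomial
`(λ − 1)² + α²σ²λ = λ² + (α²σ² − 2)λ + 1` has modulus exactly `1`, so GS GD
never converges but stays on a limit cycle. -/
theorem gauss_seidel_gd_limit_cycle (α σ : ℝ) (hα : 0 < α) (hσ : 0 < σ)
    (h : α ^ 2 * σ ^ 2 < 4) :
    ∀ z : ℂ, (z - 1) ^ 2 + (α : ℂ) ^ 2 * (σ : ℂ) ^ 2 * z = 0 → ‖z‖ = 1 :=
  gauss_seidel_gd_limit_cycle_general α σ h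
end

section
/- Let α, β₁, β₂ be real numbers and σ > 0. The quadratic polynomial (λ − 1)² + (β₁ + β₂)σ²(λ − 1) + (α²σ² + β₁β₂σ⁴) is Schur stable if and only if |(β₁ + β₂)σ² − 2| < 1 + (1 − β₁σ²)(1 − β₂σ²) + α²σ² and (1 − β₁σ²)(1 − β₂σ²) + α²σ² < 1. (This polynomial is the characteristic polynomial of generalized Jacobi extra-gradient on a bilinear game, per singular value σ; hence Jacobi EG converges linearly iff these conditions hold for all singular values σ of E.) -/
/-!
Expanded, the polynomial is the monic real quadratic `z² + b z + c` with
`b = (β₁ + β₂)σ² − 2` and `c = (1 − β₁σ²)(1 − β₂σ²) + α²σ²`, so the theorem is the Jury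
criterion `|b| < 1 + c ∧ c < 1` for such a quadratic. A non-real root `z` is paired with `z̄`,
so `‖z‖² = c`; a real root lies in `(-1, 1)` as long as `p(±1) = 1 ± b + c > 0` and `c < 1`.
Conversely `c = r₁ r₂` is a product of roots, and `p(1) ≤ 0` (resp. `p(-1) ≤ 0`) would force a
real root in `[1, ∞)` (resp. `(-∞, -1]`).
-/

lemma exists_quadratic_factorization {K : Type*} [Field K] [IsAlgClosed K] [NeZero (2 : K)]
    (b c : K) : ∃ r₁ r₂ : K, ∀ z, z ^ 2 + b * z + c = (z - r₁) * (z - r₂) := by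
  obtain ⟨s, hs⟩ := IsAlgClosed.exists_eq_mul_self (b ^ 2 - 4 * c)
  have h2 : (2 : K) ≠ 0 := two_ne_zero
  refine ⟨(-b + s) / 2, (-b - s) / 2, fun z => ?_⟩
  field_simp
  linear_combination -hs

lemma exists_quadratic_root_one_le {b c : ℝ} (hbc : 1 + b + c ≤ 0) :
    ∃ x : ℝ, 1 ≤ x ∧ x ^ 2 + b * x + c = 0 := by
  have hdisc : (b + 2) ^ 2 ≤ b ^ 2 - 4 * c := by nlinarith
  set s := √(b ^ 2 - 4 * c)
  have hs : s ^ 2 = b ^ 2 - 4 * c := Real.sq_sqrt (by nlinarith [sq_nonneg (b + 2)])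
  have hbs : b + 2 ≤ s := Real.le_sqrt_of_sq_le hdisc
  exact ⟨(-b + s) / 2, by linarith, by linear_combination hs / 4⟩

lemma quadratic_pos_of_one_le {b c x : ℝ} (hbc : 0 < 1 + b + c) (hc : c < 1) (hx : 1 ≤ x) :
    0 < x ^ 2 + b * x + c := by
  have hfactor : x ^ 2 + b * x + c = (x - 1) * (x + 1 + b) + (1 + b + c) := by ring
  have hlin : 0 < x + 1 + b := by linarith
  rw [hfactor]
  nlinarith

lemma abs_lt_one_of_quadratic_root {b c x : ℝ} (hb : |b| < 1 + c) (hc : c < 1)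
    (hx : x ^ 2 + b * x + c = 0) : |x| < 1 := by
  rw [abs_lt] at hb ⊢
  constructor
  · by_contra! h
    have := quadratic_pos_of_one_le (b := -b) (x := -x) (by linarith) hc (by linarith)
    linarith
  · by_contra! h
    have := quadratic_pos_of_one_le (b := b) (by linarith) hc h
    linarith

lemma Complex.normSq_eq_of_quadratic_root {b c : ℝ} {z : ℂ} (hz : z ^ 2 + b * z + c = 0)
    (him : z.im ≠ 0) : normSq z = c := by
  have hre : z.re ^ 2 - z.im ^ 2 + b * z.re + c = 0 := by
    simpa [pow_two] using congrArg re hz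
  have himz : z.im * (2 * z.re + b) = 0 := by
    have := congrArg im hz
    simp only [pow_two, add_im, mul_im, ofReal_re, ofReal_im, zero_mul, add_zero, zero_im] at this
    linear_combination this
  have hb : 2 * z.re + b = 0 := (mul_eq_zero.mp himz).resolve_left him
  rw [normSq_apply]
  linear_combination -hre + z.re * hb

lemma lt_one_of_quadratic_roots_norm_lt_one {b c : ℝ}
    (h : ∀ z : ℂ, z ^ 2 + (b : ℂ) * z + (c : ℂ) = 0 → ‖z‖ < 1) : c < 1 := by
  obtain ⟨r₁, r₂, hr⟩ := exists_quadratic_factorization (b : ℂ) (c : ℂ)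
  have hprod : (c : ℂ) = r₁ * r₂ := by simpa using hr 0
  have hnorm : |c| < 1 := by
    rw [← Real.norm_eq_abs, ← Complex.norm_real, hprod, norm_mul]
    exact mul_lt_one_of_nonneg_of_lt_one_left (norm_nonneg _) (h r₁ (by simp [hr]))
      (h r₂ (by simp [hr])).le
  exact lt_of_abs_lt hnorm

lemma one_add_add_pos_of_quadratic_roots_abs_lt_one {b c : ℝ}
    (h : ∀ x : ℝ, x ^ 2 + b * x + c = 0 → |x| < 1) : 0 < 1 + b + c := by
  by_contra! hle
  obtain ⟨x, hx1, hx⟩ := exists_quadratic_root_one_le hle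
  have := h x hx
  rw [abs_of_nonneg (by linarith)] at this
  linarith

lemma norm_lt_one_of_quadratic_root {b c : ℝ} (hb : |b| < 1 + c) (hc : c < 1) {z : ℂ}
    (hz : z ^ 2 + (b : ℂ) * z + (c : ℂ) = 0) : ‖z‖ < 1 := by
  rcases eq_or_ne z.im 0 with him | him
  · have hzre : z = (z.re : ℂ) := Complex.ext rfl (by simp [him])
    rw [hzre] at hz ⊢
    simpa using abs_lt_one_of_quadratic_root hb hc (by exact_mod_cast hz)
  · rw [← sq_lt_one_iff₀ (norm_nonneg z), Complex.sq_norm,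
      Complex.normSq_eq_of_quadratic_root hz him]
    exact hc

theorem schur_stable_quadratic_iff (b c : ℝ) :
    (∀ z : ℂ, z ^ 2 + (b : ℂ) * z + (c : ℂ) = 0 → ‖z‖ < 1) ↔ (|b| < 1 + c ∧ c < 1) := by
  refine ⟨fun h => ?_, fun ⟨hb, hc⟩ _ hz => norm_lt_one_of_quadratic_root hb hc hz⟩
  have hreal : ∀ x : ℝ, x ^ 2 + b * x + c = 0 → |x| < 1 := fun x hx => by
    simpa using h x (by exact_mod_cast hx)
  have hplus := one_add_add_pos_of_quadratic_roots_abs_lt_one hreal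
  have hminus := one_add_add_pos_of_quadratic_roots_abs_lt_one (b := -b) (c := c) fun x hx => by
    simpa using hreal (-x) (by linear_combination hx)
  exact ⟨abs_lt.mpr ⟨by linarith, by linarith⟩, lt_one_of_quadratic_roots_norm_lt_one h⟩

theorem jacobi_eg_schur_general (α β₁ β₂ σ : ℝ) :
    (∀ z : ℂ, (z - 1) ^ 2 + (((β₁ + β₂) * σ ^ 2 : ℝ) : ℂ) * (z - 1) +
          ((α ^ 2 * σ ^ 2 + β₁ * β₂ * σ ^ 4 : ℝ) : ℂ) = 0 → ‖z‖ < 1) ↔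
      (|(β₁ + β₂) * σ ^ 2 - 2| < 1 + (1 - β₁ * σ ^ 2) * (1 - β₂ * σ ^ 2) + α ^ 2 * σ ^ 2 ∧
        (1 - β₁ * σ ^ 2) * (1 - β₂ * σ ^ 2) + α ^ 2 * σ ^ 2 < 1) := by
  rw [add_assoc 1, ← schur_stable_quadratic_iff]
  refine forall_congr' fun z => ?_
  push_cast
  ring_nf

/-- Jacobi extra-gradient on a bilinear game: the characteristic polynomial
`(λ − 1)² + (β₁ + β₂)σ²(λ − 1) + (α²σ² + β₁β₂σ⁴)` is Schur stable iff
`|(β₁ + β₂)σ² − 2| < 1 + (1 − β₁σ²)(1 − β₂σ²) + α²σ²` and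
`(1 − β₁σ²)(1 − β₂σ²) + α²σ² < 1`. -/
theorem jacobi_eg_schur (α β₁ β₂ σ : ℝ) (hσ : 0 < σ) :
    (∀ z : ℂ, (z - 1) ^ 2 + (((β₁ + β₂) * σ ^ 2 : ℝ) : ℂ) * (z - 1) +
          ((α ^ 2 * σ ^ 2 + β₁ * β₂ * σ ^ 4 : ℝ) : ℂ) = 0 → ‖z‖ < 1) ↔
      (|(β₁ + β₂) * σ ^ 2 - 2| < 1 + (1 - β₁ * σ ^ 2) * (1 - β₂ * σ ^ 2) + α ^ 2 * σ ^ 2 ∧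
        (1 - β₁ * σ ^ 2) * (1 - β₂ * σ ^ 2) + α ^ 2 * σ ^ 2 < 1) :=
  jacobi_eg_schur_general α β₁ β₂ σ
end

section
/- Let α, β₁, β₂ be real numbers and σ > 0, and suppose β₁ + β₂ + α² < 2/σ². If the Jacobi EG conditions hold at σ, namely |(β₁ + β₂)σ² − 2| < 1 + (1 − β₁σ²)(1 − β₂σ²) + α²σ² and (1 − β₁σ²)(1 − β₂σ²) + α²σ² < 1, then the Gauss–Seidel EG conditions hold at σ, namely |(β₁ + β₂ + α²)σ² − 2| < 1 + (1 − β₁σ²)(1 − β₂σ²) and (1 − β₁σ²)(1 − β₂σ²) < 1. Hence under β₁ + β₂ + α² < 2/σ₁² the convergence region of Gauss–Seidel EG contains that of Jacobi EG. -/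
/-- If `β₁ + β₂ + α² < 2/σ²`, the Jacobi EG convergence conditions at a singular
value `σ` imply the Gauss–Seidel EG convergence conditions at `σ`; hence under
`β₁ + β₂ + α² < 2/σ₁²` the Gauss–Seidel EG convergence region contains the
Jacobi one. -/
theorem jacobi_eg_implies_gs_eg (α β₁ β₂ σ : ℝ) (hσ : 0 < σ)
    (hsum : β₁ + β₂ + α ^ 2 < 2 / σ ^ 2)
    (hJ1 : |(β₁ + β₂) * σ ^ 2 - 2| <
      1 + (1 - β₁ * σ ^ 2) * (1 - β₂ * σ ^ 2) + α ^ 2 * σ ^ 2)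
    (hJ2 : (1 - β₁ * σ ^ 2) * (1 - β₂ * σ ^ 2) + α ^ 2 * σ ^ 2 < 1) :
    |(β₁ + β₂ + α ^ 2) * σ ^ 2 - 2| < 1 + (1 - β₁ * σ ^ 2) * (1 - β₂ * σ ^ 2) ∧
      (1 - β₁ * σ ^ 2) * (1 - β₂ * σ ^ 2) < 1 := by
  have hs : (0:ℝ) < σ ^ 2 := by positivity
  have hc : (0:ℝ) ≤ α ^ 2 * σ ^ 2 := by positivity
  have hsum' : (β₁ + β₂ + α ^ 2) * σ ^ 2 < 2 := by
    have := (lt_div_iff₀ hs).mp hsum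
    linarith
  obtain ⟨hL, hR⟩ := abs_lt.mp hJ1
  refine ⟨abs_lt.mpr ⟨by nlinarith, by nlinarith⟩, by nlinarith⟩
end

section
/- Let α > 0, β₁, β₂ be real numbers and σ > 0. If the Jacobi OGD conditions hold at σ, namely |β₁β₂|σ² < 1, (α − β₁)(α − β₂) > 0, 4 + (α + β₁)(α + β₂)σ² > 0, and α²(β₁²σ² + 1)(β₂²σ² + 1) < (β₁β₂σ² + 1)(2α(β₁ + β₂) + β₁β₂(β₁β₂σ² − 3)), then the Gauss–Seidel OGD conditions hold at σ, namely (α − β₁)(α − β₂) > 0, (α + β₁)(α + β₂)σ² < 4, and (αβ₁σ² + 1)(αβ₂σ² + 1) > (1 + β₁β₂σ²)². Hence the convergence region of Gauss–Seidel OGD contains that of Jacobi OGD. -/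
set_option maxHeartbeats 1000000

lemma ogd_key (v w m : ℝ) (hv1 : -1 < v) (hv2 : v < 1)
    (h4 : 4*w*v ≤ m^2) (hJ2 : m < w + v)
    (hJ4 : 0 < -m^2 + 2*(v+1)*m + v*(v+1)*(v-3) - w*(v-1)^2) :
    w + v + m < 4 ∧ v*(2+v-w) < m := by
  have hid : (m-1-v)^2 < (1-v)^2*(1+v-w) := by nlinarith [hJ4]
  -- first: w > v
  have hwv : v < w := by
    by_contra h
    push_neg at h
    have h1 : (0:ℝ) ≤ (v-w)*(1+v-w-v^2) := by
      apply mul_nonneg (by linarith)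
      nlinarith [mul_pos (show (0:ℝ) < 1-v by linarith) (show (0:ℝ) < 1+v by linarith)]
    have h2 : (0:ℝ) < (w+v-m)*(2+v-w-m) :=
      mul_pos (by linarith) (by linarith)
    linarith [hid, h1, h2]
  have hB : 0 < 1+v-w := by
    by_contra h
    push_neg at h
    nlinarith [hid, sq_nonneg (m-1-v), mul_nonneg (sq_nonneg (1-v)) (show (0:ℝ) ≤ -(1+v-w) by linarith)]
  set t := Real.sqrt (1+v-w) with htdef
  have ht2 : t^2 = 1+v-w := Real.sq_sqrt hB.le
  have ht0 : 0 ≤ t := Real.sqrt_nonneg _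
  have ht1 : t < 1 := by nlinarith [ht2]
  have h3 : (1-v)^2*t^2 = (1-v)^2*(1+v-w) := by rw [ht2]
  have hup : m < 1+v+(1-v)*t := by
    by_contra h
    push_neg at h
    have h1 : 0 ≤ (1-v)*t := mul_nonneg (by linarith) ht0
    have h2 : (0:ℝ) ≤ (m-1-v-(1-v)*t)*(m-1-v+(1-v)*t) :=
      mul_nonneg (by linarith) (by linarith)
    linarith [hid, h2, h3]
  have hlo : 1+v-(1-v)*t < m := by
    by_contra h
    push_neg at h
    have h1 : 0 ≤ (1-v)*t := mul_nonneg (by linarith) ht0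
    have h2 : (0:ℝ) ≤ (1+v-m-(1-v)*t)*(1+v-m+(1-v)*t) :=
      mul_nonneg (by linarith) (by linarith)
    linarith [hid, h2, h3]
  have hvt : 0 ≤ 1 + v*t := by nlinarith [mul_nonneg (show (0:ℝ) ≤ 1+v by linarith) ht0]
  have hvt2 : v*t^2 = v*(1+v-w) := by rw [ht2]
  constructor
  · -- G2
    rcases le_or_gt m 0 with hm | hm
    · linarith [hB]
    rcases le_or_gt v 0 with hv0 | hv0
    · -- v ≤ 0
      nlinarith [hup, ht2, sq_nonneg (2*t-1+v),
        mul_nonneg (neg_nonneg.2 hv0) (show (0:ℝ) ≤ v+1 by linarith)]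
    -- v > 0, m > 0
    by_contra hcon
    push_neg at hcon
    have hf : t^2-(1-v)*t+2-3*v < 0 := by nlinarith [hup, ht2]
    have hQ : 0 < (1+v)*t^2 + 2*(1-v)*t + 1-3*v := by
      nlinarith [h4, hvt2, (show (0:ℝ) < 1+v by linarith),
        mul_pos (show (0:ℝ) < 1+v+(1-v)*t - m by linarith) (show (0:ℝ) < 1+v+(1-v)*t + m by linarith)]
    have hA2 : (2*t-1+v)^2 < v^2+10*v-7 := by nlinarith [hf]
    have hd : 0 < v^2+10*v-7 := lt_of_le_of_lt (sq_nonneg _) hA2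
    have hX : 0 < (3+v)*t - (1+3*v) := by
      by_contra h
      push_neg at h
      nlinarith [hQ, mul_pos (show (0:ℝ) < 1+v by linarith) (show (0:ℝ) < -(t^2-(1-v)*t+2-3*v) by linarith),
        mul_nonneg (show (0:ℝ) ≤ 1-v by linarith) (show (0:ℝ) ≤ -((3+v)*t - (1+3*v)) by linarith)]
    have hS : 0 < v^2+8*v-1 := by linarith
    have hY1 : (0:ℝ) < (3+v)*(2*t-1+v) - (v^2+8*v-1) := by nlinarith [hX]
    have hY2 : (0:ℝ) < (3+v)*(2*t-1+v) + (v^2+8*v-1) := by nlinarith [hX, hS]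
    have hYmS := mul_pos hY1 hY2
    have hA3 : (0:ℝ) ≤ v^2+10*v-7 - (2*t-1+v)^2 := by linarith
    have hfin := mul_nonneg (sq_nonneg (3+v)) hA3
    nlinarith [hYmS, hfin, hv2]
  · -- G3
    nlinarith [hlo, hvt2, mul_nonneg (show (0:ℝ) ≤ 1-t by linarith) hvt]

/-- The Jacobi OGD convergence conditions at a singular value `σ` imply the
Gauss–Seidel OGD convergence conditions at `σ`; hence the convergence region of
Gauss–Seidel OGD contains that of Jacobi OGD. -/
theorem jacobi_ogd_implies_gs_ogd (α β₁ β₂ σ : ℝ) (hα : 0 < α) (hσ : 0 < σ)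
    (hJ1 : |β₁ * β₂| * σ ^ 2 < 1)
    (hJ2 : (α - β₁) * (α - β₂) > 0)
    (hJ3 : 4 + (α + β₁) * (α + β₂) * σ ^ 2 > 0)
    (hJ4 : α ^ 2 * (β₁ ^ 2 * σ ^ 2 + 1) * (β₂ ^ 2 * σ ^ 2 + 1) <
      (β₁ * β₂ * σ ^ 2 + 1) * (2 * α * (β₁ + β₂) + β₁ * β₂ * (β₁ * β₂ * σ ^ 2 - 3))) :
    (α - β₁) * (α - β₂) > 0 ∧
      (α + β₁) * (α + β₂) * σ ^ 2 < 4 ∧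
      (α * β₁ * σ ^ 2 + 1) * (α * β₂ * σ ^ 2 + 1) > (1 + β₁ * β₂ * σ ^ 2) ^ 2 := by
  have hs : (0:ℝ) < σ^2 := pow_pos hσ 2
  have habs : |β₁ * β₂ * σ^2| < 1 := by
    rw [abs_mul, abs_of_pos hs]; exact hJ1
  have hv1 : -1 < β₁ * β₂ * σ^2 := (abs_lt.1 habs).1
  have hv2 : β₁ * β₂ * σ^2 < 1 := (abs_lt.1 habs).2
  have h4 : 4*(α^2*σ^2)*(β₁*β₂*σ^2) ≤ (α*(β₁+β₂)*σ^2)^2 := by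
    nlinarith [sq_nonneg (α*σ^2*(β₁-β₂))]
  have hJ2' : α*(β₁+β₂)*σ^2 < α^2*σ^2 + β₁*β₂*σ^2 := by
    nlinarith [mul_pos hs hJ2]
  have hJ4' : 0 < -(α*(β₁+β₂)*σ^2)^2 + 2*(β₁*β₂*σ^2+1)*(α*(β₁+β₂)*σ^2)
      + (β₁*β₂*σ^2)*(β₁*β₂*σ^2+1)*(β₁*β₂*σ^2-3) - (α^2*σ^2)*(β₁*β₂*σ^2-1)^2 := by
    nlinarith [mul_pos hs (sub_pos.2 hJ4)]
  obtain ⟨hg2, hg3⟩ := ogd_key (β₁*β₂*σ^2) (α^2*σ^2) (α*(β₁+β₂)*σ^2) hv1 hv2 h4 hJ2' hJ4'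
  refine ⟨hJ2, ?_, ?_⟩
  · nlinarith [hg2]
  · nlinarith [hg3]
end

section
/- Let α > 0, σ > 0 and β₁, β₂ be arbitrary real numbers. The quartic polynomial (λ − 1)²(λ − β₁)(λ − β₂) + α²σ²λ² is never Schur stable; that is, it always has a complex root λ with |λ| ≥ 1. Consequently, Jacobi (simultaneous) momentum updates never converge on a bilinear game. -/
/-!
If all roots `rᵢ` of a monic polynomial `p` of degree `n` lie in the open unit disk, then
`Re (1 / (1 - rᵢ)) > 1/2` for each of them, so `Re (p'(1) / p(1)) = Re ∑ 1 / (1 - rᵢ) > n / 2`.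
For `p = (λ - 1)²(λ - β₁)(λ - β₂) + cλ²` the double root of the first summand at `1` gives
`p(1) = c` and `p'(1) = 2c`; as `1` is not a root, `c ≠ 0` and the ratio is exactly `2 = 4 / 2`.
-/

open Polynomial

theorem Complex.half_lt_re_one_div_one_sub {z : ℂ} (hz : ‖z‖ < 1) : 1 / 2 < (1 / (1 - z)).re := by
  have hz' : z.re * z.re + z.im * z.im < 1 := by
    rw [← Complex.normSq_apply, ← Complex.sq_norm]; nlinarith [norm_nonneg z]
  have hne : 1 - z ≠ 0 := sub_ne_zero.mpr fun h => by simp [← h] at hz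
  rw [one_div (1 - z), Complex.inv_re, lt_div_iff₀ (Complex.normSq_pos.mpr hne)]
  simp only [Complex.normSq_apply, Complex.sub_re, Complex.sub_im, Complex.one_re, Complex.one_im]
  nlinarith

def Polynomial.IsSchurStable_s13 (p : ℂ[X]) : Prop := ∀ z, p.IsRoot z → ‖z‖ < 1

theorem Polynomial.IsSchurStable_s13.natDegree_lt_two_mul_re {p : ℂ[X]} (hp : p.IsSchurStable_s13)
    (hdeg : 0 < p.natDegree) : (p.natDegree : ℝ) < 2 * (p.derivative.eval 1 / p.eval 1).re := by
  have hp0 : p ≠ 0 := ne_zero_of_natDegree_gt hdeg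
  have hsplit : p.Splits := IsAlgClosed.splits p
  have h1 : p.eval 1 ≠ 0 := fun h => by simpa using hp 1 h
  have hroots : p.roots ≠ 0 := by
    rw [← Multiset.card_pos, ← hsplit.natDegree_eq_card_roots]; exact hdeg
  rw [hsplit.eval_derivative_div_eval_of_ne_zero h1, ← Complex.coe_reAddGroupHom, map_multiset_sum,
    Multiset.map_map]
  calc (p.natDegree : ℝ) = 2 * (p.roots.map fun _ => (1 / 2 : ℝ)).sum := by
        simp [hsplit.natDegree_eq_card_roots]; ring
    _ < _ := by
        gcongr 2 * ?_
        refine Multiset.sum_lt_sum_of_nonempty hroots fun z hz => ?_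
        exact Complex.half_lt_re_one_div_one_sub (hp z ((mem_roots hp0).mp hz))

noncomputable def momentumCharPoly (c β₁ β₂ : ℂ) : ℂ[X] :=
  (X - 1) ^ 2 * (X - C β₁) * (X - C β₂) + C c * X ^ 2

section momentumCharPoly

variable (c β₁ β₂ : ℂ)

theorem natDegree_momentumCharPoly : (momentumCharPoly c β₁ β₂).natDegree = 4 := by
  unfold momentumCharPoly; compute_degree!

theorem eval_one_momentumCharPoly : (momentumCharPoly c β₁ β₂).eval 1 = c := by
  simp [momentumCharPoly]

theorem eval_one_derivative_momentumCharPoly :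
    (momentumCharPoly c β₁ β₂).derivative.eval 1 = 2 * c := by
  simp [momentumCharPoly, derivative_mul, derivative_pow]
  ring

theorem not_isSchurStable_momentumCharPoly : ¬ (momentumCharPoly c β₁ β₂).IsSchurStable_s13 := by
  intro hp
  have hc : c ≠ 0 := fun hc => by simpa using hp 1 (by simp [momentumCharPoly, hc])
  have h := hp.natDegree_lt_two_mul_re (by rw [natDegree_momentumCharPoly]; norm_num)
  rw [natDegree_momentumCharPoly, eval_one_momentumCharPoly,
    eval_one_derivative_momentumCharPoly, mul_div_cancel_right₀ _ hc] at h
  norm_num at h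

end momentumCharPoly

theorem jacobi_momentum_never_converges_general (α β₁ β₂ σ : ℝ) :
    ∃ z : ℂ, (z - 1) ^ 2 * (z - (β₁ : ℂ)) * (z - (β₂ : ℂ)) +
        (α : ℂ) ^ 2 * (σ : ℂ) ^ 2 * z ^ 2 = 0 ∧ 1 ≤ ‖z‖ := by
  by_contra! h
  refine not_isSchurStable_momentumCharPoly ((α : ℂ) ^ 2 * (σ : ℂ) ^ 2) β₁ β₂ fun z hz => h z ?_
  simpa [momentumCharPoly] using hz

/-- Jacobi momentum on a bilinear game never converges: the characteristic
polynomial `(λ − 1)²(λ − β₁)(λ − β₂) + α²σ²λ²` is never Schur stable, i.e. it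
always has a complex root of modulus at least `1`. -/
theorem jacobi_momentum_never_converges (α β₁ β₂ σ : ℝ) (hα : 0 < α) (hσ : 0 < σ) :
    ∃ z : ℂ, (z - 1) ^ 2 * (z - (β₁ : ℂ)) * (z - (β₂ : ℂ)) +
        (α : ℂ) ^ 2 * (σ : ℂ) ^ 2 * z ^ 2 = 0 ∧ 1 ≤ ‖z‖ :=
  jacobi_momentum_never_converges_general α β₁ β₂ σ
end

section
/- Let α > 0, σ > 0 and β₁, β₂ be real numbers satisfying the Gauss–Seidel momentum convergence conditions: |β₁β₂| < 1, |−α²σ² + β₁ + β₂ + 2| < β₁β₂ + 3, 4(β₁ + 1)(β₂ + 1) > α²σ², and α²σ²β₁β₂ < (1 − β₁β₂)(2β₁β₂ − β₁ − β₂). Then at least one of β₁, β₂ is negative, i.e., β₁ < 0 or β₂ < 0. -/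
/-- Necessity of negative momentum: if the Gauss–Seidel momentum convergence
conditions hold at some singular value `σ`, then at least one of the momentum
parameters `β₁, β₂` is negative. -/
theorem gs_momentum_negative (α β₁ β₂ σ : ℝ) (hα : 0 < α) (hσ : 0 < σ)
    (h1 : |β₁ * β₂| < 1)
    (h2 : |-(α ^ 2 * σ ^ 2) + β₁ + β₂ + 2| < β₁ * β₂ + 3)
    (h3 : 4 * (β₁ + 1) * (β₂ + 1) > α ^ 2 * σ ^ 2)
    (h4 : α ^ 2 * σ ^ 2 * (β₁ * β₂) < (1 - β₁ * β₂) * (2 * β₁ * β₂ - β₁ - β₂)) :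
    β₁ < 0 ∨ β₂ < 0 := by
  by_contra h
  push_neg at h
  obtain ⟨hb1, hb2⟩ := h
  have hs : 0 < α ^ 2 * σ ^ 2 := by positivity
  have hlt : β₁ * β₂ < 1 := lt_of_abs_lt h1
  -- a+b ≥ 2ab since a+b ≥ 2√(ab) ≥ 2ab when ab ≤ 1
  nlinarith [mul_nonneg hb1 hb2, mul_nonneg (mul_nonneg hb1 hb2) (mul_nonneg hb1 hb2),
    sq_nonneg (β₁ - β₂), sq_nonneg (β₁ + β₂), mul_pos hs hs,
    mul_nonneg hs.le (mul_nonneg hb1 hb2), mul_nonneg hb1 hb1, mul_nonneg hb2 hb2,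
    mul_nonneg (mul_nonneg hb1 hb2) (sub_nonneg.mpr hlt.le)]
end

section
/- Let 0 < σₙ ≤ σ₁ be real numbers, κ = σ₁/σₙ, and set α = √2/σ₁ and β₁ = √2·σ₁/(σ₁² + σₙ²). Then for every σ with σₙ ≤ σ ≤ σ₁, every complex root λ of the quadratic λ² + (α²σ² − 2)λ + (1 − αβ₁σ²) satisfies |λ| ≤ √((κ² − 1)/(κ² + 1)); moreover for σ = σₙ this quadratic has a root of modulus exactly √((κ² − 1)/(κ² + 1)). -/
/-!
With `t = σ/σₙ ∈ [1, κ]` the quadratic reads `z² + (2t²/κ² - 2) z + (1 - 2t²/(κ² + 1))`.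
Its roots lie in the closed disc of radius `ρ = √((κ² - 1)/(κ² + 1))` by the Jury criterion
for a real quadratic `p(z) = z² + b z + c`: `|b| ≤ 2ρ`, `c ≤ ρ²` and `p(±ρ) ≥ 0`. Each of these
conditions comes down to `ρ (κ² + 1) ≤ κ²`, that is, `κ⁴ - 1 ≤ κ⁴`. At `t = 1` the discriminant
is nonpositive and the constant term is `ρ²`, so the two conjugate roots have modulus exactly `ρ`.
-/

theorem abs_le_of_quadratic_eq_zero {b c r x : ℝ} (hb : |b| ≤ 2 * r)
    (hpos : 0 ≤ r ^ 2 + b * r + c) (hneg : 0 ≤ r ^ 2 - b * r + c)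
    (hx : x ^ 2 + b * x + c = 0) : |x| ≤ r := by
  obtain ⟨hb₁, hb₂⟩ := abs_le.mp hb
  refine abs_le.mpr ⟨?_, ?_⟩
  · by_contra! h
    nlinarith [mul_pos (by linarith : 0 < -r - x) (by linarith : 0 < r - b - x)]
  · by_contra! h
    nlinarith [mul_pos (by linarith : 0 < x - r) (by linarith : 0 < x + r + b)]

theorem Complex.norm_le_of_quadratic_eq_zero {b c r : ℝ} (hb : |b| ≤ 2 * r) (hc : c ≤ r ^ 2)
    (hpos : 0 ≤ r ^ 2 + b * r + c) (hneg : 0 ≤ r ^ 2 - b * r + c) {z : ℂ}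
    (hz : z ^ 2 + b * z + c = 0) : ‖z‖ ≤ r := by
  have hre : z.re ^ 2 - z.im ^ 2 + b * z.re + c = 0 := by
    simpa [sq] using congrArg Complex.re hz
  have him : z.im * (2 * z.re + b) = 0 := by
    linear_combination (by simpa [sq] using congrArg Complex.im hz : _ = _)
  rcases mul_eq_zero.mp him with hy | hvertex
  · have hzx : z = z.re := Complex.ext rfl (by simpa using hy)
    rw [hzx, Complex.norm_real, Real.norm_eq_abs]
    exact abs_le_of_quadratic_eq_zero hb hpos hneg (by simpa [hy] using hre)
  · -- `z` and `conj z` are the two roots, so `‖z‖² = c` by Vieta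
    have hnormSq : ‖z‖ ^ 2 = c := by
      rw [Complex.sq_norm, Complex.normSq_apply]
      linear_combination -hre + z.re * hvertex
    have hr : 0 ≤ r := by linarith [abs_nonneg b]
    exact (sq_le_sq₀ (norm_nonneg z) hr).mp (hnormSq ▸ hc)

theorem exists_quadratic_eq_zero_norm_eq_sqrt {b c : ℝ} (h : b ^ 2 ≤ 4 * c) :
    ∃ z : ℂ, z ^ 2 + b * z + c = 0 ∧ ‖z‖ = √c := by
  set y := √(c - b ^ 2 / 4)
  have hy : y ^ 2 = c - b ^ 2 / 4 := Real.sq_sqrt (by linarith)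
  refine ⟨⟨-b / 2, y⟩, ?_, ?_⟩
  · apply Complex.ext <;>
      simp only [sq, Complex.add_re, Complex.add_im, Complex.mul_re, Complex.mul_im,
        Complex.ofReal_re, Complex.ofReal_im, zero_mul, sub_zero, add_zero, Complex.zero_re,
        Complex.zero_im]
    · linear_combination -hy
    · ring
  · rw [← Real.sqrt_sq (norm_nonneg _), Complex.sq_norm, Complex.normSq_mk]
    congr 1
    linear_combination hy

theorem sqrt_sq_sub_one_div_sq_add_one_mul_le {κ : ℝ} (hκ : 1 ≤ κ) :
    √((κ ^ 2 - 1) / (κ ^ 2 + 1)) * (κ ^ 2 + 1) ≤ κ ^ 2 := by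
  have hpos : 0 < κ ^ 2 + 1 := by positivity
  rw [← le_div_iff₀ hpos, Real.sqrt_le_left (by positivity), div_pow,
    div_le_div_iff₀ hpos (by positivity)]
  nlinarith

theorem norm_le_of_ogd_root {κ t : ℝ} (ht : 1 ≤ t) (htκ : t ≤ κ) {z : ℂ}
    (hz : z ^ 2 + ((2 * t ^ 2 / κ ^ 2 - 2 : ℝ) : ℂ) * z + ((1 - 2 * t ^ 2 / (κ ^ 2 + 1) : ℝ) : ℂ) = 0) :
    ‖z‖ ≤ √((κ ^ 2 - 1) / (κ ^ 2 + 1)) := by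
  set a := κ ^ 2
  set ρ := √((a - 1) / (a + 1))
  have ha : 1 ≤ a := one_le_pow₀ (ht.trans htκ)
  have hta : t ^ 2 ≤ a := pow_le_pow_left₀ (by linarith) htκ 2
  have ht2 : 1 ≤ t ^ 2 := one_le_pow₀ ht
  have hρ0 : 0 ≤ ρ := Real.sqrt_nonneg _
  have hρ2 : ρ ^ 2 * (a + 1) = a - 1 := by
    rw [Real.sq_sqrt (div_nonneg (by linarith) (by linarith))]
    field_simp
  have hρ : ρ * (a + 1) ≤ a := sqrt_sq_sub_one_div_sq_add_one_mul_le (ht.trans htκ)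
  have hb : (2 * t ^ 2 / a - 2) * a = 2 * t ^ 2 - 2 * a := by field_simp
  have hc : (1 - 2 * t ^ 2 / (a + 1)) * (a + 1) = a + 1 - 2 * t ^ 2 := by field_simp
  set b := 2 * t ^ 2 / a - 2
  set c := 1 - 2 * t ^ 2 / (a + 1)
  have hb0 : b ≤ 0 := by nlinarith
  refine Complex.norm_le_of_quadratic_eq_zero (abs_le.mpr ⟨?_, by linarith⟩) ?_ ?_ ?_ hz
  · nlinarith [mul_le_mul_of_nonneg_left hρ hρ0]
  · nlinarith
  · nlinarith [mul_le_mul_of_nonneg_left hρ (by linarith : 0 ≤ a - t ^ 2)]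
  · nlinarith [mul_nonneg hρ0 (neg_nonneg.mpr hb0)]

theorem exists_ogd_root_norm_eq {κ : ℝ} (hκ : 1 ≤ κ) :
    ∃ z : ℂ, z ^ 2 + ((2 / κ ^ 2 - 2 : ℝ) : ℂ) * z + ((1 - 2 / (κ ^ 2 + 1) : ℝ) : ℂ) = 0 ∧
      ‖z‖ = √((κ ^ 2 - 1) / (κ ^ 2 + 1)) := by
  set a := κ ^ 2
  have ha : 1 ≤ a := one_le_pow₀ hκ
  have hc : 1 - 2 / (a + 1) = (a - 1) / (a + 1) := by field_simp; ring
  rw [hc]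
  refine exists_quadratic_eq_zero_norm_eq_sqrt ?_
  rw [show (2 / a - 2) ^ 2 = 4 * (a - 1) ^ 2 / a ^ 2 by field_simp; ring, mul_div_assoc',
    div_le_div_iff₀ (by positivity) (by positivity)]
  nlinarith [mul_nonneg (by linarith : (0 : ℝ) ≤ a - 1) (by linarith : (0 : ℝ) ≤ a - 1)]

/-- Optimal Gauss–Seidel OGD (with β₂ = 0): with `α = √2/σ₁` and
`β₁ = √2·σ₁/(σ₁² + σₙ²)`, every complex root of
`λ² + (α²σ² − 2)λ + (1 − αβ₁σ²)` (for any singular value `σₙ ≤ σ ≤ σ₁`) has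
modulus at most `√((κ² − 1)/(κ² + 1))`, and this bound is attained at `σ = σₙ`. -/
theorem gs_ogd_optimal_rate (σn σ1 κ α β₁ : ℝ) (h0 : 0 < σn) (h1 : σn ≤ σ1)
    (hκ : κ = σ1 / σn) (hα : α = Real.sqrt 2 / σ1)
    (hβ : β₁ = Real.sqrt 2 * σ1 / (σ1 ^ 2 + σn ^ 2)) :
    (∀ σ : ℝ, σn ≤ σ → σ ≤ σ1 → ∀ z : ℂ,
        z ^ 2 + ((α ^ 2 * σ ^ 2 - 2 : ℝ) : ℂ) * z + ((1 - α * β₁ * σ ^ 2 : ℝ) : ℂ) = 0 →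
        ‖z‖ ≤ Real.sqrt ((κ ^ 2 - 1) / (κ ^ 2 + 1))) ∧
      ∃ z : ℂ,
        z ^ 2 + ((α ^ 2 * σn ^ 2 - 2 : ℝ) : ℂ) * z + ((1 - α * β₁ * σn ^ 2 : ℝ) : ℂ) = 0 ∧
          ‖z‖ = Real.sqrt ((κ ^ 2 - 1) / (κ ^ 2 + 1)) := by
  have hσ1 : 0 < σ1 := h0.trans_le h1
  have hcoeff (σ : ℝ) :
      α ^ 2 * σ ^ 2 = 2 * (σ / σn) ^ 2 / κ ^ 2 ∧
        α * β₁ * σ ^ 2 = 2 * (σ / σn) ^ 2 / (κ ^ 2 + 1) := by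
    have hs : √2 ^ 2 = 2 := Real.sq_sqrt zero_le_two
    subst hκ hα hβ
    constructor <;> field_simp <;> rw [hs] <;> ring
  constructor
  · intro σ hσn hσσ1 z hz
    rw [(hcoeff σ).1, (hcoeff σ).2] at hz
    refine norm_le_of_ogd_root ?_ ?_ hz
    · rwa [one_le_div h0]
    · rw [hκ]; gcongr
  · obtain ⟨hα2, hαβ⟩ := hcoeff σn
    rw [div_self h0.ne', one_pow, mul_one] at hα2 hαβ
    rw [hα2, hαβ]
    exact exists_ogd_root_norm_eq (by rwa [hκ, one_le_div h0])
end

section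
/- Let α > 0 and σ > 0 be real numbers. Every complex root λ of the polynomial (1 − λ)² + α²σ²λ² satisfies |λ| = 1/√(1 + α²σ²) < 1. Consequently the proximal point algorithm on a bilinear game always converges linearly. -/
/-!
Over `ℂ` the quadratic factors as `(1 - z(1 + aI)) (1 - z(1 - aI))` with `a = ασ`, so every root
is the inverse of `1 ± aI`, a number of modulus `√(1 + a²)`.
-/

open Complex

lemma Complex.norm_one_add_mul_I (b : ℝ) : ‖1 + b * I‖ = √(1 + b ^ 2) := by
  simpa using norm_add_mul_I 1 b

lemma Complex.norm_eq_one_div_sqrt_of_one_sub_sq_add_sq_mul_sq_eq_zero {a : ℝ} {z : ℂ}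
    (hz : (1 - z) ^ 2 + (a : ℂ) ^ 2 * z ^ 2 = 0) : ‖z‖ = 1 / √(1 + a ^ 2) := by
  have hsq : (1 - z) ^ 2 = (a * I * z) ^ 2 := by
    linear_combination hz - (a : ℂ) ^ 2 * z ^ 2 * I_sq
  obtain ⟨b, hb, hroot⟩ : ∃ b : ℝ, b ^ 2 = a ^ 2 ∧ z * (1 + b * I) = 1 := by
    rcases sq_eq_sq_iff_eq_or_eq_neg.mp hsq with h | h
    · exact ⟨a, rfl, by linear_combination -h⟩
    · exact ⟨-a, neg_sq a, by push_cast; linear_combination -h⟩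
  refine eq_one_div_of_mul_eq_one_left ?_
  simpa [norm_one_add_mul_I, hb] using congrArg norm hroot

lemma Real.one_div_sqrt_one_add_lt_one {t : ℝ} (ht : 0 < t) : 1 / √(1 + t) < 1 := by
  rw [div_lt_one (by positivity), Real.lt_sqrt zero_le_one]
  linarith

/-- Proximal point algorithm on a bilinear game: every complex root `λ` of
`(1 − λ)² + α²σ²λ²` has modulus `1/√(1 + α²σ²) < 1`; hence the proximal point
algorithm always converges linearly. -/
theorem proximal_point_converges (α σ : ℝ) (hα : 0 < α) (hσ : 0 < σ) :
    (∀ z : ℂ, (1 - z) ^ 2 + (α : ℂ) ^ 2 * (σ : ℂ) ^ 2 * z ^ 2 = 0 →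
        ‖z‖ = 1 / Real.sqrt (1 + α ^ 2 * σ ^ 2)) ∧
      1 / Real.sqrt (1 + α ^ 2 * σ ^ 2) < 1 := by
  refine ⟨fun z hz => ?_, Real.one_div_sqrt_one_add_lt_one (by positivity)⟩
  rw [← mul_pow]
  refine norm_eq_one_div_sqrt_of_one_sub_sq_add_sq_mul_sq_eq_zero (a := α * σ) ?_
  push_cast
  linear_combination hz
end
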